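/- arXiv:2509.12109 — 8 statements merged into one kernel-verified Lean document; each statement's English description precedes it below -/
import Mathlib

section
/- Let V be a type, and let 𝒫 be a finite family (a Finset) of pairwise disjoint, nonempty finite subsets of V. For a finite subset T of V, let L(T) denote the number of members of 𝒫 that are contained in T. Then for every nonempty finite subset S of V, the derivative at τ = 1 of the real polynomial function τ ↦ ∑_{T ⊆ S} (−1)^{|S|−|T|} · τ^{L(T)} equals 1 if S is a member of 𝒫, and equals 0 otherwise. -/
/-!
The derivative at `1` is `∑_{T ⊆ S} (-1)^{|S|-|T|} L(T)`. Writing `L(T) = ∑_{P ∈ 𝒫} [P ⊆ T]` and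
exchanging the sums, each `P` contributes `∑_{P ⊆ T ⊆ S} (-1)^{|S|-|T|}`, the Möbius function of
the Boolean lattice, which is the binomial expansion of `(1 - 1)^{|S \ P|}` and hence `[P = S]`.
-/

open Finset

namespace Finset

variable {α R : Type*} [DecidableEq α] [CommRing R]

theorem sum_Icc_neg_one_pow_card_sub (s t : Finset α) :
    ∑ u ∈ Icc s t, (-1 : R) ^ (#t - #u) = if s = t then 1 else 0 := by
  by_cases hst : s ⊆ t
  · have hinj : Set.InjOn (s ∪ ·) ((t \ s).powerset : Set (Finset α)) := fun u hu v hv huv => by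
      simp only [coe_powerset, Set.mem_preimage, Set.mem_powerset_iff, coe_subset] at hu hv
      rw [← union_sdiff_cancel_left (disjoint_sdiff.mono_right hu),
        ← union_sdiff_cancel_left (disjoint_sdiff.mono_right hv)]
      exact congrArg (· \ s) huv
    have hcard : ∀ u ∈ (t \ s).powerset, #t - #(s ∪ u) = #(t \ s) - #u := fun u hu => by
      have hu := mem_powerset.mp hu
      rw [card_union_of_disjoint (disjoint_sdiff.mono_right hu), card_sdiff_of_subset hst]
      have := card_le_card hu
      have := card_le_card hst
      omega
    calc ∑ u ∈ Icc s t, (-1 : R) ^ (#t - #u)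
        = ∑ u ∈ (t \ s).powerset, (1 : R) ^ #u * (-1) ^ (#(t \ s) - #u) := by
          rw [Icc_eq_image_powerset hst, sum_image hinj]
          exact sum_congr rfl fun u hu => by rw [hcard u hu, one_pow, one_mul]
      _ = if s = t then 1 else 0 := by
          have hempty : t \ s = ∅ ↔ s = t :=
            sdiff_eq_empty_iff_subset.trans ⟨subset_antisymm hst, fun h => h ▸ subset_rfl⟩
          rw [sum_pow_mul_eq_add_pow, add_neg_cancel, zero_pow_eq]
          exact if_congr (card_eq_zero.trans hempty) rfl rfl
  · rw [Icc_eq_empty hst, sum_empty, if_neg (fun h : s = t => hst (h ▸ subset_rfl))]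

theorem sum_powerset_neg_one_pow_card_sub_mul_card_filter_subset (Ps : Finset (Finset α))
    (S : Finset α) :
    ∑ T ∈ S.powerset, (-1 : R) ^ (#S - #T) * #{P ∈ Ps | P ⊆ T} = if S ∈ Ps then 1 else 0 := by
  have hIcc : ∀ P : Finset α, {T ∈ S.powerset | P ⊆ T} = Icc P S := fun P => by
    ext T; simp [and_comm]
  calc ∑ T ∈ S.powerset, (-1 : R) ^ (#S - #T) * #{P ∈ Ps | P ⊆ T}
      = ∑ P ∈ Ps, ∑ T ∈ {T ∈ S.powerset | P ⊆ T}, (-1 : R) ^ (#S - #T) := by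
        simp only [natCast_card_filter, mul_sum, mul_boole, sum_filter]
        exact sum_comm
    _ = if S ∈ Ps then 1 else 0 := by
        simp only [hIcc, sum_Icc_neg_one_pow_card_sub, sum_ite_eq']

end Finset

theorem deriv_sum_const_mul_pow_one {𝕜 ι : Type*} [NontriviallyNormedField 𝕜] (s : Finset ι)
    (c : ι → 𝕜) (n : ι → ℕ) :
    deriv (fun x : 𝕜 => ∑ i ∈ s, c i * x ^ n i) 1 = ∑ i ∈ s, c i * n i := by
  rw [deriv_fun_sum fun i _ => by fun_prop]
  refine sum_congr rfl fun i _ => ?_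
  simp

theorem stmt0_general {V : Type*} [DecidableEq V] (Ps : Finset (Finset V))
    (S : Finset V) :
    deriv (fun τ : ℝ => ∑ T ∈ S.powerset,
        (-1 : ℝ) ^ (S.card - T.card) * τ ^ ((Ps.filter fun P => P ⊆ T).card)) 1
      = if S ∈ Ps then 1 else 0 := by
  rw [deriv_sum_const_mul_pow_one]
  exact sum_powerset_neg_one_pow_card_sub_mul_card_filter_subset Ps S

/-- The alternating-sum polynomial indicator for cluster surfaces:
for a family `Ps` of pairwise disjoint nonempty finite subsets of `V`,
with `L T` the number of members of `Ps` contained in `T`,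
the derivative at `τ = 1` of `τ ↦ ∑_{T ⊆ S} (−1)^{|S|−|T|} τ^{L T}`
is `1` if `S ∈ Ps` and `0` otherwise. -/
theorem stmt0 {V : Type*} [DecidableEq V] (Ps : Finset (Finset V))
    (hdisj : (Ps : Set (Finset V)).Pairwise fun P Q => Disjoint P Q)
    (hne : ∀ P ∈ Ps, P.Nonempty)
    (S : Finset V) (hS : S.Nonempty) :
    deriv (fun τ : ℝ => ∑ T ∈ S.powerset,
        (-1 : ℝ) ^ (S.card - T.card) * τ ^ ((Ps.filter fun P => P ⊆ T).card)) 1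
      = if S ∈ Ps then 1 else 0 :=
  stmt0_general Ps S
end

section
/- Let ι be a type, S a finite subset of ι with |S| ≥ 2, and F : Finset ι → ℝ → ℝ a family of real functions such that for every finite A ⊆ ι, the function F(A) is differentiable at 1 and F(A)(1) = 1. Then the derivative at τ = 1 of the function τ ↦ ∑_{T ⊆ S} (−1)^{|S|−|T|} · F(T)(τ) · ∏_{i ∈ S \ T} F({i})(τ) equals the derivative at τ = 1 of the function τ ↦ ∑_{T ⊆ S} (−1)^{|S|−|T|} · F(T)(τ). -/
/-! Since every `F A` equals `1` at `τ = 1`, the product rule gives the `T`-th summand on the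
left the derivative `±(F T' + ∑_{i ∈ S \ T} F {i}')`. The extra terms cancel: after exchanging
the sums, each `F {i}'` is multiplied by an alternating sum over the subsets of `S \ {i}`,
which is nonempty because `2 ≤ |S|`. -/

open Finset

theorem neg_one_pow_tsub_eq_mul {R : Type*} [Monoid R] [HasDistribNeg R] {m n : ℕ}
    (h : m ≤ n) : (-1 : R) ^ (n - m) = (-1) ^ n * (-1) ^ m := by
  obtain ⟨k, rfl⟩ := Nat.exists_eq_add_of_le h
  rw [Nat.add_sub_cancel_left, ← pow_add, add_right_comm, ← two_mul, pow_add, pow_mul,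
    neg_one_sq, one_pow, one_mul]

theorem Finset.sum_powerset_neg_one_pow_tsub_card_of_nonempty {ι R : Type*} [Ring R]
    {s : Finset ι} (hs : s.Nonempty) {n : ℕ} (hn : #s ≤ n) :
    ∑ T ∈ s.powerset, (-1 : R) ^ (n - #T) = 0 := by
  have hsign : ∀ T ∈ s.powerset, (-1 : R) ^ (n - #T) = (-1) ^ n * (-1) ^ #T := fun T hT =>
    neg_one_pow_tsub_eq_mul ((card_le_card (mem_powerset.mp hT)).trans hn)
  rw [sum_congr rfl hsign, ← mul_sum]
  have halt : ∑ T ∈ s.powerset, (-1 : R) ^ #T = 0 := by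
    exact_mod_cast congrArg (Int.cast : ℤ → R) (sum_powerset_neg_one_pow_card_of_nonempty hs)
  rw [halt, mul_zero]

theorem Finset.sum_powerset_neg_one_pow_tsub_card_mul_sum_sdiff {ι R : Type*} [DecidableEq ι]
    [Ring R] {S : Finset ι} (hS : 2 ≤ #S) (g : ι → R) :
    ∑ T ∈ S.powerset, (-1 : R) ^ (#S - #T) * ∑ i ∈ S \ T, g i = 0 := by
  have hswap : ∑ T ∈ S.powerset, ∑ i ∈ S \ T, (-1 : R) ^ (#S - #T) * g i
      = ∑ i ∈ S, ∑ T ∈ (S.erase i).powerset, (-1 : R) ^ (#S - #T) * g i :=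
    sum_comm' fun T i => by
      simp only [mem_powerset, mem_sdiff, subset_erase]
      tauto
  simp_rw [mul_sum]
  rw [hswap]
  refine sum_eq_zero fun i hi => ?_
  have hne : (S.erase i).Nonempty := by
    rw [← card_pos, card_erase_of_mem hi]
    omega
  rw [← sum_mul, sum_powerset_neg_one_pow_tsub_card_of_nonempty (R := R) hne card_erase_le,
    zero_mul]

theorem HasDerivAt.fun_finsetProd_of_eq_one {ι 𝕜 𝔸 : Type*} [DecidableEq ι]
    [NontriviallyNormedField 𝕜] [NormedCommRing 𝔸] [NormedAlgebra 𝕜 𝔸] {u : Finset ι}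
    {f : ι → 𝕜 → 𝔸} {f' : ι → 𝔸} {x : 𝕜} (hf : ∀ i ∈ u, HasDerivAt (f i) (f' i) x)
    (hf_one : ∀ i ∈ u, f i x = 1) :
    HasDerivAt (fun y => ∏ i ∈ u, f i y) (∑ i ∈ u, f' i) x := by
  refine (HasDerivAt.fun_finsetProd hf).congr_deriv (sum_congr rfl fun i _ => ?_)
  rw [prod_eq_one fun j hj => hf_one j (mem_of_mem_erase hj), one_smul]

/-- Replacing the subtraction of `1` by subtraction of one-point expectation
factors does not change the derivative at `τ = 1` of the alternating sum. -/
theorem stmt2 {ι : Type*} [DecidableEq ι] (S : Finset ι) (hS : 2 ≤ S.card)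
    (F : Finset ι → ℝ → ℝ)
    (hdiff : ∀ A : Finset ι, DifferentiableAt ℝ (F A) 1)
    (hone : ∀ A : Finset ι, F A 1 = 1) :
    deriv (fun τ : ℝ => ∑ T ∈ S.powerset,
        (-1 : ℝ) ^ (S.card - T.card) * F T τ * ∏ i ∈ S \ T, F {i} τ) 1
      = deriv (fun τ : ℝ => ∑ T ∈ S.powerset,
        (-1 : ℝ) ^ (S.card - T.card) * F T τ) 1 := by
  set d : Finset ι → ℝ := fun A => deriv (F A) 1
  have hF : ∀ T ∈ S.powerset, HasDerivAt (fun τ => (-1 : ℝ) ^ (#S - #T) * F T τ)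
      ((-1) ^ (#S - #T) * d T) 1 := fun T _ => (hdiff T).hasDerivAt.const_mul _
  have hFprod : ∀ T ∈ S.powerset,
      HasDerivAt (fun τ => (-1 : ℝ) ^ (#S - #T) * F T τ * ∏ i ∈ S \ T, F {i} τ)
        ((-1) ^ (#S - #T) * (d T + ∑ i ∈ S \ T, d {i})) 1 := fun T hT => by
    refine ((hF T hT).fun_mul (HasDerivAt.fun_finsetProd_of_eq_one (u := S \ T)
      (fun i _ => (hdiff {i}).hasDerivAt) fun i _ => hone {i})).congr_deriv ?_
    simp only [hone, prod_const_one]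
    ring
  rw [(HasDerivAt.fun_sum hFprod).deriv, (HasDerivAt.fun_sum hF).deriv]
  simp_rw [mul_add, sum_add_distrib]
  rw [sum_powerset_neg_one_pow_tsub_card_mul_sum_sdiff hS, add_zero]
end

section
/- Let ι be a type, R a commutative ring, T a finite subset of ι, E a subset of ι (with decidable membership), and F : Finset ι → R a function satisfying F(U) = F(U ∩ E) · F(U \ E) for every U ⊆ T. Then ∑_{U ⊆ T} (−1)^{|T|−|U|} F(U) = (∑_{A ⊆ T ∩ E} (−1)^{|T ∩ E|−|A|} F(A)) · (∑_{B ⊆ T \ E} (−1)^{|T \ E|−|B|} F(B)). -/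
/-!
Splitting `U ↦ (U ∩ E, U \ E)` identifies the subsets of `T` with pairs of subsets of
`T ∩ E` and `T \ E` (inverse `(A, B) ↦ A ∪ B`). Under this identification both `F` and the
sign `(-1) ^ (|T| - |U|)` factor, so the sum over `U` becomes a product of two sums.
-/

open Finset

namespace Finset

variable {ι M : Type*} (p : ι → Prop) [DecidablePred p]

theorem filter_union_eq_left_of_subset_filter [DecidableEq ι] {T A B : Finset ι}
    (hA : A ⊆ T.filter p) (hB : B ⊆ T.filter (¬ p ·)) : (A ∪ B).filter p = A := by
  rw [filter_union, filter_true_of_mem fun x hx => (mem_filter.mp (hA hx)).2,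
    filter_false_of_mem fun x hx => (mem_filter.mp (hB hx)).2, union_empty]

theorem filter_union_eq_right_of_subset_filter [DecidableEq ι] {T A B : Finset ι}
    (hA : A ⊆ T.filter p) (hB : B ⊆ T.filter (¬ p ·)) : (A ∪ B).filter (¬ p ·) = B := by
  rw [filter_union, filter_false_of_mem fun x hx => not_not.mpr (mem_filter.mp (hA hx)).2,
    filter_true_of_mem fun x hx => (mem_filter.mp (hB hx)).2, empty_union]

theorem sum_powerset_eq_sum_powerset_filter_sum_powerset_filter_not [DecidableEq ι]
    [AddCommMonoid M] (T : Finset ι) (f : Finset ι → Finset ι → M) :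
    ∑ U ∈ T.powerset, f (U.filter p) (U.filter (¬ p ·))
      = ∑ A ∈ (T.filter p).powerset, ∑ B ∈ (T.filter (¬ p ·)).powerset, f A B := by
  rw [← sum_product']
  refine sum_nbij' (fun U => (U.filter p, U.filter (¬ p ·))) (fun AB => AB.1 ∪ AB.2)
    ?_ ?_ ?_ ?_ fun _ _ => rfl
  · intro U hU
    simp only [mem_product, mem_powerset] at hU ⊢
    exact ⟨filter_subset_filter _ hU, filter_subset_filter _ hU⟩
  · rintro ⟨A, B⟩ hAB
    simp only [mem_product, mem_powerset] at hAB ⊢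
    exact union_subset (hAB.1.trans (filter_subset _ _)) (hAB.2.trans (filter_subset _ _))
  · intro U _
    exact filter_union_filter_not_eq p U
  · rintro ⟨A, B⟩ hAB
    simp only [mem_product, mem_powerset] at hAB
    rw [filter_union_eq_left_of_subset_filter p hAB.1 hAB.2,
      filter_union_eq_right_of_subset_filter p hAB.1 hAB.2]

theorem card_sub_card_eq_add_of_subset {T U : Finset ι} (hU : U ⊆ T) :
    #T - #U = (#(T.filter p) - #(U.filter p)) + (#(T.filter (¬ p ·)) - #(U.filter (¬ p ·))) := by
  have hT := card_filter_add_card_filter_not p (s := T)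
  have hU' := card_filter_add_card_filter_not p (s := U)
  have hpos := card_le_card (filter_subset_filter p hU)
  have hneg := card_le_card (filter_subset_filter (¬ p ·) hU)
  omega

end Finset

/-- If a correlation functional `F` is multiplicative across the two-block
partition given by `E` and its complement, the alternating sum over subsets of
`T` factorizes into the product of the alternating sums over `T ∩ E` and
`T \ E`. -/
theorem stmt3 {ι : Type*} [DecidableEq ι] {R : Type*} [CommRing R]
    (T : Finset ι) (E : Set ι) [DecidablePred (· ∈ E)]
    (F : Finset ι → R)
    (hF : ∀ U ⊆ T, F U = F (U.filter (· ∈ E)) * F (U.filter (· ∉ E))) :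
    ∑ U ∈ T.powerset, (-1 : R) ^ (T.card - U.card) * F U
      = (∑ A ∈ (T.filter (· ∈ E)).powerset,
          (-1 : R) ^ ((T.filter (· ∈ E)).card - A.card) * F A)
      * (∑ B ∈ (T.filter (· ∉ E)).powerset,
          (-1 : R) ^ ((T.filter (· ∉ E)).card - B.card) * F B) := by
  rw [sum_mul_sum, ← sum_powerset_eq_sum_powerset_filter_sum_powerset_filter_not (· ∈ E)]
  refine sum_congr rfl fun U hU => ?_
  rw [hF U (mem_powerset.mp hU), card_sub_card_eq_add_of_subset (· ∈ E) (mem_powerset.mp hU),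
    pow_add]
  ring
end

section
/- Let ι be a type, E a subset of ι (with decidable membership), and F : Finset ι → ℝ → ℝ a family of real functions such that for every finite U ⊆ ι: F(U) is differentiable at 1, F(U)(1) = 1, and F(U)(τ) = F(U ∩ E)(τ) · F(U \ E)(τ) for all τ. Then for every finite subset T of ι such that both T ∩ E and T \ E are nonempty, the derivative at τ = 1 of the function τ ↦ ∑_{U ⊆ T} (−1)^{|T|−|U|} F(U)(τ) equals 0. -/
/-!
By the product rule and `F U 1 = 1`, the derivative of `F U` at `1` is the sum of the derivatives
of its even and odd parts, so the alternating sum of derivatives splits into two alternating sums,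
the first depending on `U` only through `U ∩ E`, the second only through `U \ E`. An alternating
sum over `T.powerset` vanishes as soon as its summand does not see some `x ∈ T`: the subsets `U`
and `insert x U` cancel in pairs.
-/

namespace Finset

variable {ι R : Type*} [DecidableEq ι] [CommRing R]

theorem sum_powerset_neg_one_pow_card_sub_mul_eq_zero_of_insert {T : Finset ι} {x : ι}
    (hx : x ∈ T) (f : Finset ι → R) (hf : ∀ U, f (insert x U) = f U) :
    ∑ U ∈ T.powerset, (-1 : R) ^ (T.card - U.card) * f U = 0 := by
  have hxT : x ∉ T.erase x := notMem_erase x T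
  rw [← insert_erase hx, sum_powerset_insert hxT, card_insert_of_notMem hxT, ← sum_add_distrib]
  refine sum_eq_zero fun U hU => ?_
  have hUT : U ⊆ T.erase x := mem_powerset.1 hU
  have hxU : x ∉ U := fun h => hxT (hUT h)
  have hcard : U.card ≤ (T.erase x).card := card_le_card hUT
  rw [card_insert_of_notMem hxU, hf, Nat.add_sub_add_right,
    show (T.erase x).card + 1 - U.card = (T.erase x).card - U.card + 1 by omega, pow_succ]
  ring

theorem sum_powerset_neg_one_pow_card_sub_mul_filter_eq_zero (p : ι → Prop) [DecidablePred p]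
    {T : Finset ι} {x : ι} (hx : x ∈ T) (hpx : ¬ p x) (g : Finset ι → R) :
    ∑ U ∈ T.powerset, (-1 : R) ^ (T.card - U.card) * g (U.filter p) = 0 :=
  sum_powerset_neg_one_pow_card_sub_mul_eq_zero_of_insert hx _ fun U => by
    rw [filter_insert, if_neg hpx]

end Finset

open Finset

theorem deriv_mul_of_eq_one {𝕜 : Type*} [NontriviallyNormedField 𝕜] {f g : 𝕜 → 𝕜} {x : 𝕜}
    (hf : DifferentiableAt 𝕜 f x) (hg : DifferentiableAt 𝕜 g x) (hf1 : f x = 1) (hg1 : g x = 1) :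
    deriv (fun τ => f τ * g τ) x = deriv f x + deriv g x := by
  rw [deriv_fun_mul hf hg, hf1, hg1, mul_one, one_mul]

/-- Mixed-parity vanishing: if `F` equals `1` at `τ = 1`, is differentiable
there, and factorizes across the partition `E` / `Eᶜ`, then for `T` meeting
both blocks the derivative at `τ = 1` of the alternating sum vanishes. -/
theorem stmt4 {ι : Type*} [DecidableEq ι] (E : Set ι) [DecidablePred (· ∈ E)]
    (F : Finset ι → ℝ → ℝ)
    (hdiff : ∀ U : Finset ι, DifferentiableAt ℝ (F U) 1)
    (hone : ∀ U : Finset ι, F U 1 = 1)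
    (hmul : ∀ (U : Finset ι) (τ : ℝ),
      F U τ = F (U.filter (· ∈ E)) τ * F (U.filter (· ∉ E)) τ)
    (T : Finset ι)
    (h1 : (T.filter (· ∈ E)).Nonempty) (h2 : (T.filter (· ∉ E)).Nonempty) :
    deriv (fun τ : ℝ => ∑ U ∈ T.powerset,
        (-1 : ℝ) ^ (T.card - U.card) * F U τ) 1 = 0 := by
  obtain ⟨a, ha⟩ := h1
  obtain ⟨b, hb⟩ := h2
  rw [mem_filter] at ha hb
  have hsplit : ∀ U, deriv (F U) 1
      = deriv (F (U.filter (· ∈ E))) 1 + deriv (F (U.filter (· ∉ E))) 1 := fun U => by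
    rw [show F U = _ from funext (hmul U), deriv_mul_of_eq_one (hdiff _) (hdiff _) (hone _) (hone _)]
  rw [deriv_fun_sum fun U _ => (hdiff U).const_mul _]
  simp only [deriv_const_mul_field]
  rw [sum_congr rfl fun U _ => by rw [hsplit U, mul_add], sum_add_distrib,
    sum_powerset_neg_one_pow_card_sub_mul_filter_eq_zero (· ∈ E) hb.1 hb.2 fun V => deriv (F V) 1,
    sum_powerset_neg_one_pow_card_sub_mul_filter_eq_zero (· ∉ E) ha.1 (not_not.2 ha.2)
      fun V => deriv (F V) 1, add_zero]
end

section
/- Let ι be a type, S a finite subset of ι, and F : Finset (ι × Bool) → ℝ → ℝ a family of real functions such that for every finite U ⊆ ι × Bool: F(U) is differentiable at 1, F(U)(1) = 1, and F(U)(τ) = F(U ∩ (ι × {false}))(τ) · F(U ∩ (ι × {true}))(τ) for all τ. For b : ι → Bool let S_b denote the image of S under the map i ↦ (i, b(i)), and let g(T)(τ) = ∑_{U ⊆ T} (−1)^{|T|−|U|} F(U)(τ). Then the derivative at τ = 1 of τ ↦ ∑_{b : ι → Bool with b constant outside S, summed over all functions b : S → Bool} g(S_b)(τ) equals the derivative at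 τ = 1 of g(S_{false})(τ) plus the derivative at τ = 1 of g(S_{true})(τ), where S_{false} and S_{true} are the images of S under i ↦ (i, false) and i ↦ (i, true) respectively. -/
/-!
Write `f U` for the derivative of `F U` at `1`. Since `F U` is the product of its even and odd
parts and both equal `1` at `τ = 1`, the product rule makes `f` additive over the parity split:
`f U = f (U ∩ even) + f (U ∩ odd)`. The derivative of `g T` is the alternating (Möbius) sum of `f`
over the subsets of `T`, and the alternating sum of a function that only sees `U ∩ even` vanishes
as soon as `T` contains an odd element: adding or removing that element pairs the subsets of `T`
with opposite signs and equal values. Hence for a choice of parities `b`, the even part contributes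
only when `b` is constantly even and the odd part only when `b` is constantly odd.
-/

open Finset

section Mobius

variable {α R : Type*} [CommRing R]

def powersetMobius (h : Finset α → R) (T : Finset α) : R :=
  ∑ U ∈ T.powerset, (-1) ^ (#T - #U) * h U

theorem powersetMobius_add (h k : Finset α → R) (T : Finset α) :
    powersetMobius (h + k) T = powersetMobius h T + powersetMobius k T := by
  simp only [powersetMobius, Pi.add_apply, mul_add, sum_add_distrib]

theorem powersetMobius_filter_of_forall (h : Finset α → R) {p : α → Prop} [DecidablePred p]
    {T : Finset α} (hT : ∀ x ∈ T, p x) :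
    powersetMobius (fun U => h (U.filter p)) T = powersetMobius h T :=
  sum_congr rfl fun U hU => by
    beta_reduce
    rw [filter_true_of_mem fun x hx => hT x (mem_powerset.1 hU hx)]

theorem powersetMobius_filter_eq_zero [DecidableEq α] (h : Finset α → R) {p : α → Prop}
    [DecidablePred p] {T : Finset α} {x : α} (hxT : x ∈ T) (hx : ¬ p x) :
    powersetMobius (fun U => h (U.filter p)) T = 0 := by
  unfold powersetMobius
  rw [← insert_erase hxT, sum_powerset_insert (notMem_erase x T), ← sum_add_distrib]
  refine sum_eq_zero fun U hU => ?_
  beta_reduce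
  have hUT : U ⊆ T.erase x := mem_powerset.1 hU
  have hUx : x ∉ U := fun hxU => notMem_erase x T (hUT hxU)
  have hcard : #(T.erase x) + 1 - #U = #(T.erase x) - #U + 1 := by
    have := card_le_card hUT
    omega
  rw [filter_insert, if_neg hx, card_insert_of_notMem (notMem_erase x T),
    card_insert_of_notMem hUx, hcard, Nat.add_sub_add_right, pow_succ]
  ring

end Mobius

section Parity

variable {ι R : Type*} [DecidableEq ι] [CommRing R]

theorem attach_image_const (S : Finset ι) (c : Bool) :
    (S.attach.image fun i : S => (i.1, c)) = S.image fun i => (i, c) := by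
  ext p
  simp

theorem powersetMobius_filter_snd_attach_image (h : Finset (ι × Bool) → R) (S : Finset ι)
    (b : S → Bool) (c : Bool) :
    powersetMobius (fun U => h (U.filter fun p => p.2 = c)) (S.attach.image fun i => (i.1, b i))
      = if b = fun _ => c then powersetMobius h (S.image fun i => (i, c)) else 0 := by
  split_ifs with hb
  · subst hb
    rw [powersetMobius_filter_of_forall, attach_image_const]
    simp
  · obtain ⟨i, hi⟩ : ∃ i, b i ≠ c := by
      by_contra! hall
      exact hb (funext hall)
    exact powersetMobius_filter_eq_zero h (mem_image_of_mem _ (mem_attach S i)) hi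

theorem sum_powersetMobius_attach_image {f : Finset (ι × Bool) → R}
    (hf : ∀ U, f U = f (U.filter fun p => p.2 = false) + f (U.filter fun p => p.2 = true))
    (S : Finset ι) :
    ∑ b : S → Bool, powersetMobius f (S.attach.image fun i => (i.1, b i))
      = powersetMobius f (S.image fun i => (i, false))
        + powersetMobius f (S.image fun i => (i, true)) := by
  have hsplit : f = (fun U => f (U.filter fun p => p.2 = false))
      + (fun U => f (U.filter fun p => p.2 = true)) := funext hf
  have hterm (b : S → Bool) : powersetMobius f (S.attach.image fun i => (i.1, b i))
      = (if b = fun _ => false then powersetMobius f (S.image fun i => (i, false)) else 0)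
        + (if b = fun _ => true then powersetMobius f (S.image fun i => (i, true)) else 0) := by
    conv_lhs => rw [hsplit]
    rw [powersetMobius_add, powersetMobius_filter_snd_attach_image,
      powersetMobius_filter_snd_attach_image]
  simp only [hterm, sum_add_distrib, Fintype.sum_ite_eq']

end Parity

theorem HasDerivAt.mul_of_eq_one {𝕜 : Type*} [NontriviallyNormedField 𝕜] {G H : 𝕜 → 𝕜}
    {g' h' x : 𝕜} (hG : HasDerivAt G g' x) (hH : HasDerivAt H h' x) (hG1 : G x = 1)
    (hH1 : H x = 1) : HasDerivAt (G * H) (g' + h') x := by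
  simpa [hG1, hH1, add_comm] using hG.mul hH

/-- Parity separation: summing the alternating correlation sum `g` over all
choices of one parity per site, only the all-even and all-odd terms contribute
to the derivative at `τ = 1`. -/
theorem stmt5 {ι : Type*} [DecidableEq ι] (S : Finset ι)
    (F : Finset (ι × Bool) → ℝ → ℝ)
    (hdiff : ∀ U : Finset (ι × Bool), DifferentiableAt ℝ (F U) 1)
    (hone : ∀ U : Finset (ι × Bool), F U 1 = 1)
    (hmul : ∀ (U : Finset (ι × Bool)) (τ : ℝ),
      F U τ = F (U.filter fun p => p.2 = false) τ * F (U.filter fun p => p.2 = true) τ)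
    (g : Finset (ι × Bool) → ℝ → ℝ)
    (hg : ∀ (T : Finset (ι × Bool)) (τ : ℝ),
      g T τ = ∑ U ∈ T.powerset, (-1 : ℝ) ^ (T.card - U.card) * F U τ) :
    deriv (fun τ : ℝ => ∑ b : {x // x ∈ S} → Bool,
        g (S.attach.image fun i : {x // x ∈ S} => (i.1, b i)) τ) 1
      = deriv (g (S.image fun i => (i, false))) 1
        + deriv (g (S.image fun i => (i, true))) 1 := by
  have hadd (U : Finset (ι × Bool)) : deriv (F U) 1
      = deriv (F (U.filter fun p => p.2 = false)) 1
        + deriv (F (U.filter fun p => p.2 = true)) 1 := by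
    rw [show F U = F (U.filter fun p => p.2 = false) * F (U.filter fun p => p.2 = true) from
      funext (hmul U)]
    exact ((hdiff _).hasDerivAt.mul_of_eq_one (hdiff _).hasDerivAt (hone _) (hone _)).deriv
  have hderiv (T : Finset (ι × Bool)) :
      HasDerivAt (g T) (powersetMobius (fun U => deriv (F U) 1) T) 1 := by
    rw [funext (hg T)]
    exact HasDerivAt.fun_sum fun U _ => (hdiff U).hasDerivAt.const_mul _
  rw [(HasDerivAt.fun_sum fun b _ => hderiv _).deriv, (hderiv _).deriv, (hderiv _).deriv]
  exact sum_powersetMobius_attach_image hadd S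
end

section
/- The Catalan numbers satisfy the asymptotic C_n ∼ 4^n / (n^{3/2} √π); precisely, the sequence n ↦ (C_n · √π · n^{3/2}) / 4^n tends to 1 as n → ∞. -/
/-!
Since `C_n = binom(2n, n) / (n + 1)`, it suffices to show `binom(2n, n) · √(π n) / 4^n → 1`.
Writing `n! = s_n · √(2n) · (n/e)^n` with Mathlib's Stirling sequence `s_n`, the powers of `n/e`
cancel exactly and `binom(2n, n) · √n / 4^n = s_{2n} / s_n²`, which tends to `√π / π` by
Stirling's formula `s_n → √π`.
-/

open Filter Topology Real Stirling Nat

lemma centralBinom_mul_sqrt_div_four_pow {n : ℕ} (hn : n ≠ 0) :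
    (centralBinom n : ℝ) * √n / 4 ^ n = stirlingSeq (2 * n) / stirlingSeq n ^ 2 := by
  have hfact : (centralBinom n : ℝ) * n ! * n ! = (2 * n)! := by
    rw [centralBinom_eq_two_mul_choose]
    exact_mod_cast (two_mul n ▸ add_choose_mul_factorial_mul_factorial n n)
  have hsqrt : √(2 * (2 * n : ℕ)) = 2 * √n := by
    rw [cast_mul, ← mul_assoc, sqrt_mul (by norm_num)]
    norm_num
  have hpow : ((2 * n : ℕ) / exp 1 : ℝ) ^ (2 * n) = 4 ^ n * ((n / exp 1) ^ n) ^ 2 := by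
    rw [cast_mul, cast_two, mul_div_assoc, pow_mul, mul_pow, ← pow_mul, mul_comm n 2, pow_mul,
      mul_pow]
    norm_num
  rw [stirlingSeq, stirlingSeq, ← hfact, hsqrt, hpow]
  field_simp
  rw [sq_sqrt (by positivity), sq_sqrt (by positivity)]
  ring

theorem tendsto_centralBinom_mul_sqrt_div_four_pow :
    Tendsto (fun n : ℕ => (centralBinom n : ℝ) * √n / 4 ^ n) atTop (𝓝 (√π)⁻¹) := by
  have hlim : Tendsto (fun n : ℕ => stirlingSeq (2 * n) / stirlingSeq n ^ 2) atTop
      (𝓝 (√π / √π ^ 2)) :=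
    (tendsto_stirlingSeq_sqrt_pi.comp (tendsto_id.const_mul_atTop' two_pos)).div
      (tendsto_stirlingSeq_sqrt_pi.pow 2) (by positivity)
  rw [sq, div_mul_cancel_left₀ (by positivity)] at hlim
  exact hlim.congr' <| (eventually_ne_atTop 0).mono fun n hn =>
    (centralBinom_mul_sqrt_div_four_pow hn).symm

lemma catalan_eq_centralBinom_div_succ (n : ℕ) :
    (catalan n : ℝ) = centralBinom n / (n + 1) := by
  rw [eq_div_iff n.cast_add_one_ne_zero, ← succ_mul_catalan_eq_centralBinom]
  push_cast
  ring

/-- Catalan number asymptotics: `C_n ∼ 4^n / (n^{3/2} √π)`, i.e.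
`C_n · √π · n^{3/2} / 4^n → 1` as `n → ∞`. -/
theorem stmt6 :
    Tendsto (fun n : ℕ =>
        (catalan n : ℝ) * Real.sqrt Real.pi * (n : ℝ) ^ ((3 : ℝ) / 2) / 4 ^ n)
      atTop (nhds 1) := by
  have hlim := (tendsto_centralBinom_mul_sqrt_div_four_pow.const_mul √π).mul
    (tendsto_natCast_div_add_atTop (1 : ℝ))
  rw [mul_inv_cancel₀ (by positivity), one_mul] at hlim
  refine hlim.congr fun n => ?_
  have hpow : (n : ℝ) ^ ((3 : ℝ) / 2) = n * √n := by
    rw [show (3 : ℝ) / 2 = 1 + 1 / 2 by norm_num, rpow_add' n.cast_nonneg (by norm_num), rpow_one,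
      sqrt_eq_rpow]
  rw [catalan_eq_centralBinom_div_succ, hpow]
  field_simp
end

section
/- In the Dyck-word circuit at p = 1/2, the probability that two boundary sites at odd distance x = 2n − 1 are entangled equals 2^{−(2n−1)} · C_n, and this probability scales as x^{−3/2}: precisely, the sequence n ↦ (2n − 1)^{3/2} · 2^{−(2n−1)} · C_n tends to 2^{5/2}/√π as n → ∞. -/
/-! Since `C_n = binom(2n, n) / (n + 1)` and Stirling's formula gives
`binom(2n, n) ~ 4^n / √(π n)`, we get `C_n ~ 4^n / (√π n^{3/2})`. Together with
`(2n - 1)^{3/2} ~ (2n)^{3/2}` and the exact identity `2^{-(2n-1)} 4^n = 2`, the sequence is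
asymptotically equivalent to the constant `2^{3/2} · 2 / √π`. -/

open Filter Asymptotics Real

lemma Nat.cast_centralBinom_eq_factorial_div (n : ℕ) :
    (n.centralBinom : ℝ) = (2 * n).factorial / n.factorial ^ 2 := by
  rw [Nat.centralBinom_eq_two_mul_choose, Nat.cast_choose ℝ (by omega : n ≤ 2 * n),
    show 2 * n - n = n by omega, sq]

lemma stirling_two_mul_div_sq {n : ℕ} (hn : n ≠ 0) :
    √(2 * (2 * n : ℕ) * π) * ((2 * n : ℕ) / exp 1) ^ (2 * n)
        / (√(2 * n * π) * (n / exp 1) ^ n) ^ 2 = 4 ^ n / √(π * n) := by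
  have hπn : 0 < π * n := by positivity
  have hsqrt : √(2 * (2 * n : ℕ) * π) = 2 * √(π * n) := by
    rw [show (2 * (2 * n : ℕ) * π : ℝ) = 2 ^ 2 * (π * n) by push_cast; ring,
      sqrt_mul (by positivity), sqrt_sq zero_le_two]
  have hpow : ((2 * n : ℕ) / exp 1 : ℝ) ^ (2 * n) = 4 ^ n * ((n / exp 1) ^ n) ^ 2 := by
    rw [Nat.cast_mul, Nat.cast_ofNat, mul_div_assoc, mul_pow, pow_mul (2 : ℝ) 2 n]
    ring
  have hsq : √(2 * n * π) ^ 2 = 2 * (π * n) := by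
    rw [sq_sqrt (by positivity)]; ring
  rw [hsqrt, hpow, mul_pow, hsq]
  have : (n / exp 1 : ℝ) ^ n ≠ 0 := by positivity
  field_simp
  rw [sq_sqrt hπn.le]

lemma Nat.centralBinom_isEquivalent :
    (fun n : ℕ => (n.centralBinom : ℝ)) ~[atTop] fun n => 4 ^ n / √(π * n) := by
  have h2n : Tendsto (fun n : ℕ => 2 * n) atTop atTop :=
    tendsto_id.const_mul_atTop' two_pos
  have := (Stirling.factorial_isEquivalent_stirling.comp_tendsto h2n).div
    (Stirling.factorial_isEquivalent_stirling.pow 2)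
  refine (this.congr_left (.of_eq ?_)).congr_right ?_
  · ext n; simp [Nat.cast_centralBinom_eq_factorial_div]
  · filter_upwards [eventually_ne_atTop 0] with n hn
    exact stirling_two_mul_div_sq hn

lemma cast_catalan_eq_centralBinom_div (n : ℕ) :
    (catalan n : ℝ) = n.centralBinom / (n + 1) := by
  rw [eq_div_iff (by positivity), mul_comm, ← succ_mul_catalan_eq_centralBinom]
  push_cast; ring

lemma catalan_isEquivalent :
    (fun n : ℕ => (catalan n : ℝ)) ~[atTop] fun n => 4 ^ n / (√π * n ^ ((3 : ℝ) / 2)) := by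
  have hsucc : (fun n : ℕ => (n : ℝ) + 1) ~[atTop] fun n => (n : ℝ) :=
    IsEquivalent.refl.add_const_of_norm_tendsto_atTop <|
      tendsto_norm_atTop_atTop.comp tendsto_natCast_atTop_atTop
  refine ((Nat.centralBinom_isEquivalent.div hsucc).congr_left (.of_eq ?_)).congr_right
    (.of_eq ?_)
  · ext n; exact (cast_catalan_eq_centralBinom_div n).symm
  · ext n
    have h32 : (n : ℝ) ^ ((3 : ℝ) / 2) = √n * n := by
      rw [sqrt_eq_rpow, ← rpow_add_one' (Nat.cast_nonneg n) (by norm_num)]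
      norm_num
    rw [Pi.div_apply, div_div, sqrt_mul pi_pos.le, mul_assoc, h32]

lemma two_rpow_neg_two_mul_sub_one_mul_four_pow (n : ℕ) :
    (2 : ℝ) ^ (-(2 * (n : ℝ) - 1)) * 4 ^ n = 2 := by
  rw [show (4 : ℝ) ^ n = 2 ^ (2 * (n : ℝ)) by
      rw [rpow_mul zero_le_two, rpow_natCast]; norm_num,
    ← rpow_add two_pos]
  norm_num

/-- In the Dyck-word circuit at `p = 1/2` the entanglement probability of two
sites at distance `x = 2n − 1` is `2^{−(2n−1)} C_n`, and it scales as
`x^{−3/2}`: `(2n−1)^{3/2} · 2^{−(2n−1)} · C_n → 2^{5/2}/√π`. -/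
theorem stmt7 :
    Tendsto (fun n : ℕ =>
        (2 * (n : ℝ) - 1) ^ ((3 : ℝ) / 2)
          * (2 : ℝ) ^ (-(2 * (n : ℝ) - 1)) * (catalan n : ℝ))
      atTop (nhds ((2 : ℝ) ^ ((5 : ℝ) / 2) / Real.sqrt Real.pi)) := by
  have hodd : (fun n : ℕ => 2 * (n : ℝ) - 1) ~[atTop] fun n => 2 * (n : ℝ) :=
    IsEquivalent.refl.sub_isLittleO <| isLittleO_const_left.mpr <| .inr <|
      tendsto_norm_atTop_atTop.comp <| tendsto_natCast_atTop_atTop.const_mul_atTop two_pos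
  have hequiv : (fun n : ℕ => (2 * (n : ℝ) - 1) ^ ((3 : ℝ) / 2)
        * (2 : ℝ) ^ (-(2 * (n : ℝ) - 1)) * (catalan n : ℝ)) ~[atTop]
      fun n => (2 * (n : ℝ)) ^ ((3 : ℝ) / 2) * (2 : ℝ) ^ (-(2 * (n : ℝ) - 1))
        * (4 ^ n / (√π * n ^ ((3 : ℝ) / 2))) :=
    ((hodd.rpow fun n => by positivity).mul IsEquivalent.refl).mul catalan_isEquivalent
  refine hequiv.tendsto_nhds_iff.mpr (tendsto_const_nhds.congr' ?_)
  filter_upwards [eventually_ne_atTop 0] with n hn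
  have hpos : 0 < (n : ℝ) ^ ((3 : ℝ) / 2) := by positivity
  rw [mul_rpow zero_le_two (Nat.cast_nonneg n), mul_assoc _ (2 ^ _), mul_div_assoc',
    two_rpow_neg_two_mul_sub_one_mul_four_pow, show (5 : ℝ) / 2 = 3 / 2 + 1 by norm_num, rpow_add_one two_ne_zero]
  field_simp
end

section
/- Let (Ω, μ) be a probability space, let k ≥ 2 be a natural number, let γ be a real number, and let p₀ > 0. Suppose that for every vector of positive-integer gaps g : Fin (k−1) → ℕ+ there is a measurable set A(g) ⊆ Ω, that the sets A(g) are pairwise disjoint for distinct g, and that μ(A(g)) ≥ p₀ · ∏_{j} (g(j))^{−γ} for every g. Then γ > 1. -/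
open MeasureTheory

/-! If `γ ≤ 1`, the function `g ↦ ∏ⱼ g(j)^{-γ}` is not summable over gap vectors: fixing all
gaps but one to `1` leaves the divergent series `∑ n^{-γ}`. On the other hand it is bounded by
`μ(A g) / p₀`, which is summable because the `A g` are disjoint and `μ` is finite. -/

theorem summable_measureReal_of_pairwise_disjoint {ι Ω : Type*} [MeasurableSpace Ω]
    {μ : Measure Ω} [IsFiniteMeasure μ] {A : ι → Set Ω} (hmeas : ∀ i, MeasurableSet (A i))
    (hdisj : Pairwise fun i j => Disjoint (A i) (A j)) : Summable fun i => μ.real (A i) :=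
  ENNReal.summable_toReal
    ((tsum_meas_le_meas_iUnion_of_disjoint μ hmeas hdisj).trans_lt (measure_lt_top _ _)).ne

theorem Summable.of_pi_prod {ι α R : Type*} [Fintype ι] [DecidableEq ι] [CommRing R]
    [UniformSpace R] [IsUniformAddGroup R] [CompleteSpace R] {f : α → R} {a₀ : α}
    (ha₀ : f a₀ = 1) (i₀ : ι) (h : Summable fun g : ι → α => ∏ i, f (g i)) : Summable f := by
  have hslice : ∀ a, ∏ i, f (Function.update (fun _ => a₀) i₀ a i) = f a := fun a => by
    simp only [Function.apply_update (fun _ => f), Finset.prod_update_of_mem (Finset.mem_univ _),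
      ha₀, Finset.prod_const_one, mul_one]
  simpa only [Function.comp_def, hslice] using
    h.comp_injective (Function.update_injective (fun _ => a₀) i₀)

theorem Real.summable_pnat_rpow {p : ℝ} :
    Summable (fun n : ℕ+ => ((n : ℕ) : ℝ) ^ p) ↔ p < -1 :=
  summable_pnat_iff_summable_nat.trans Real.summable_nat_rpow

/-- Entanglement monogamy forces the decay exponent to exceed `1`:
if pairwise disjoint events indexed by gap vectors `g : Fin (k−1) → ℕ+` have
probabilities bounded below by `p₀ ∏ g(j)^{−γ}`, then `γ > 1`. -/
theorem stmt8 {Ω : Type*} [MeasurableSpace Ω] (μ : Measure Ω)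
    [IsProbabilityMeasure μ]
    (k : ℕ) (hk : 2 ≤ k) (γ : ℝ) (p₀ : ℝ) (hp₀ : 0 < p₀)
    (A : (Fin (k - 1) → ℕ+) → Set Ω)
    (hmeas : ∀ g, MeasurableSet (A g))
    (hdisj : Pairwise fun g g' => Disjoint (A g) (A g'))
    (hlb : ∀ g, p₀ * ∏ j, ((g j : ℕ) : ℝ) ^ (-γ) ≤ (μ (A g)).toReal) :
    1 < γ := by
  have hprod : Summable fun g : Fin (k - 1) → ℕ+ => ∏ j, ((g j : ℕ) : ℝ) ^ (-γ) :=
    ((summable_measureReal_of_pairwise_disjoint hmeas hdisj).div_const p₀).of_nonneg_of_le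
      (fun g => by positivity) (fun g => (le_div_iff₀' hp₀).2 (hlb g))
  have hgap : Summable fun n : ℕ+ => ((n : ℕ) : ℝ) ^ (-γ) :=
    hprod.of_pi_prod (a₀ := 1) (by simp) ⟨0, by omega⟩
  linarith [Real.summable_pnat_rpow.1 hgap]
end
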